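/- arXiv:0802.1815 — 3 statements merged into one kernel-verified Lean document; each statement's English description precedes it below -/
import Mathlib

section
/- Let q ≥ 3 be an integer, let p be a prime with p ≥ q, and let r be a power of p. Then for any composition [ω₀, ω₁, …, ω_{q−1}] of r, there exists a q-ary constant-composition code C of length r with composition [ω₀, ω₁, …, ω_{q−1}] whose minimum distance is at least 3 and whose size M satisfies M · r ≥ r!/(ω₀!·ω₁!⋯ω_{q−1}!). -/
/-!
Identify the `r` positions with the elements of `𝔽_r` and the `q ≤ p` symbols with the
elements `0, …, q - 1` of its prime field, and split the words of composition `ω` according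
to their syndrome `∑ᵢ cᵢ αᵢ ∈ 𝔽_r`. Two words of the same composition at distance at most `2`
differ by transposing two positions `i ≠ j` holding distinct symbols `a ≠ b`, which changes
the syndrome by `(a - b)(αᵢ - αⱼ) ≠ 0`. Hence each of the `r` syndrome classes is a code of
minimum distance at least `3`, and by pigeonhole one of them has at least `1/r` of all words.
-/

open Finset Function MvPolynomial

section Composition

variable {ι α : Type*} [Fintype ι]

/-- Both sides are the coefficient of `∏ X a ^ ω a` in `(∑ X a) ^ card ι`. -/
theorem card_filter_forall_card_fiber_eq_multinomial [DecidableEq ι] [Fintype α] [DecidableEq α]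
    (ω : α → ℕ) (hω : ∑ a, ω a = Fintype.card ι) :
    #{c : ι → α | ∀ a, #{i | c i = a} = ω a} = Nat.multinomial univ ω := by
  set d : α →₀ ℕ := Finsupp.equivFunOnFinite.symm ω
  have hd : d.sum (fun _ m ↦ m) = Fintype.card ι := by
    rw [Finsupp.sum_fintype _ _ fun _ ↦ rfl]
    exact hω
  have hexpand : (∑ a, X a : MvPolynomial α ℕ) ^ Fintype.card ι
      = ∑ c : ι → α, monomial (∑ i, Finsupp.single (c i) 1) 1 := by
    rw [← card_univ, ← prod_const, Fintype.prod_sum]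
    simp only [X, ← monomial_sum_one]
  have hcoeff := coeff_sum_X_pow_of_fintype (R := ℕ) d (Fintype.card ι)
  rw [if_pos hd, Finsupp.multinomial_eq_of_support_subset (subset_univ _), hexpand,
    coeff_sum] at hcoeff
  simp only [coeff_monomial, sum_boole, Nat.cast_id] at hcoeff
  convert hcoeff using 3 with c
  · simp [Finsupp.ext_iff, Finsupp.finsetSum_apply, Finsupp.single_apply, d]
  · rfl

variable [DecidableEq α] {u v : ι → α}

lemma card_filter_eq_and_ne_of_card_fiber_eq (h : ∀ a, #{i | u i = a} = #{i | v i = a})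
    (a : α) : #{i | u i = a ∧ u i ≠ v i} = #{i | v i = a ∧ u i ≠ v i} := by
  have hsplit (w : ι → α) :
      #{i | w i = a ∧ u i ≠ v i} + #{i | w i = a ∧ ¬u i ≠ v i} = #{i | w i = a} := by
    simp only [← filter_filter, card_filter_add_card_filter_not]
  have hagree : #{i | u i = a ∧ ¬u i ≠ v i} = #{i | v i = a ∧ ¬u i ≠ v i} := by
    congr 1
    exact filter_congr fun i _ ↦ by
      rw [not_ne_iff]
      exact and_congr_left fun h ↦ by rw [h]
  have := hsplit u
  have := hsplit v
  have := h a
  omega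

lemma exists_ne_apply_eq_of_card_fiber_eq (h : ∀ a, #{i | u i = a} = #{i | v i = a})
    {i : ι} (hi : u i ≠ v i) : ∃ j, u j ≠ v j ∧ j ≠ i ∧ v j = u i := by
  have hpos : 0 < #{j | v j = u i ∧ u j ≠ v j} := by
    rw [← card_filter_eq_and_ne_of_card_fiber_eq h]
    exact card_pos.mpr ⟨i, by simp [hi]⟩
  obtain ⟨j, hj⟩ := card_pos.mp hpos
  obtain ⟨hvj, hj⟩ := (mem_filter.mp hj).2
  exact ⟨j, hj, fun hji ↦ hi (hji ▸ hvj).symm, hvj⟩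

lemma exists_eq_comp_swap_of_hammingDist_le_two [DecidableEq ι]
    (h : ∀ a, #{i | u i = a} = #{i | v i = a}) (huv : u ≠ v) (hdist : hammingDist u v ≤ 2) :
    ∃ i j, u i ≠ u j ∧ v = u ∘ Equiv.swap i j := by
  obtain ⟨i, hi⟩ := Function.ne_iff.mp huv
  obtain ⟨j, hj, hji, hvj⟩ := exists_ne_apply_eq_of_card_fiber_eq h hi
  obtain ⟨k, hk, hkj, hvk⟩ := exists_ne_apply_eq_of_card_fiber_eq h hj
  have hdiff : ({l | u l ≠ v l} : Finset ι) = {i, j} := by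
    refine (eq_of_subset_of_card_le ?_ (by rw [card_pair hji.symm]; exact hdist)).symm
    simp [insert_subset_iff, hi, hj]
  have hki : k = i := by
    have : k ∈ ({i, j} : Finset ι) := hdiff ▸ mem_filter.mpr ⟨mem_univ k, hk⟩
    simpa [hkj] using this
  subst hki
  refine ⟨k, j, fun h ↦ hj (hvj.trans h).symm, funext fun l ↦ ?_⟩
  rcases eq_or_ne l k with rfl | hlk
  · simp [hvk]
  rcases eq_or_ne l j with rfl | hlj
  · simp [hvj]
  have hl : l ∉ ({k, j} : Finset ι) := by simp [hlk, hlj]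
  rw [← hdiff, mem_filter, not_and, not_ne_iff] at hl
  simp [Equiv.swap_apply_of_ne_of_ne hlk hlj, hl (mem_univ l)]

end Composition

section Syndrome

variable {ι α F : Type*} [Fintype ι]

def syndrome [AddCommMonoid F] [Mul F] (s : α → F) (x : ι → F) (c : ι → α) : F :=
  ∑ i, s (c i) * x i

lemma syndrome_comp_swap [DecidableEq ι] [CommRing F] (s : α → F) (x : ι → F) (c : ι → α)
    (i j : ι) :
    syndrome s x (c ∘ Equiv.swap i j) = syndrome s x c - (s (c i) - s (c j)) * (x i - x j) := by
  rcases eq_or_ne i j with rfl | hij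
  · simp
  have hreindex : syndrome s x (c ∘ Equiv.swap i j) = ∑ k, s (c k) * x (Equiv.swap i j k) := by
    rw [← Equiv.sum_comp (Equiv.swap i j) (fun k ↦ s (c k) * x (Equiv.swap i j k))]
    simp [syndrome]
  have hdiff : syndrome s x c - syndrome s x (c ∘ Equiv.swap i j)
      = (s (c i) - s (c j)) * (x i - x j) := by
    rw [hreindex, syndrome, ← sum_sub_distrib,
      Fintype.sum_eq_add i j hij fun k hk ↦ by simp [Equiv.swap_apply_of_ne_of_ne hk.1 hk.2]]
    simp only [Equiv.swap_apply_left, Equiv.swap_apply_right]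
    ring
  linear_combination -hdiff

theorem three_le_hammingDist_of_syndrome_eq [DecidableEq ι] [DecidableEq α] [CommRing F]
    [NoZeroDivisors F] {s : α → F} {x : ι → F} (hs : Injective s) (hx : Injective x)
    {u v : ι → α} (h : ∀ a, #{i | u i = a} = #{i | v i = a})
    (hsyn : syndrome s x u = syndrome s x v) (huv : u ≠ v) : 3 ≤ hammingDist u v := by
  by_contra! hlt
  obtain ⟨i, j, hij, rfl⟩ := exists_eq_comp_swap_of_hammingDist_le_two h huv (by omega)
  rw [syndrome_comp_swap, eq_comm, sub_eq_self] at hsyn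
  rcases mul_eq_zero.mp hsyn with hsij | hxij
  · exact hij (hs (sub_eq_zero.mp hsij))
  · exact hij (congrArg u (hx (sub_eq_zero.mp hxij)))

end Syndrome

lemma exists_card_le_card_fiber_mul {β γ : Type*} [Fintype γ] [Nonempty γ] [DecidableEq γ]
    (S : Finset β) (f : β → γ) : ∃ y, #S ≤ #{c ∈ S | f c = y} * Fintype.card γ := by
  obtain ⟨y, -, hy⟩ := exists_max_image univ (fun y ↦ #{c ∈ S | f c = y}) univ_nonempty
  exact ⟨y, card_le_mul_card_image_of_maps_to (fun c _ ↦ mem_univ (f c)) _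
    fun y' _ ↦ hy y' (mem_univ y')⟩

theorem exists_constComposition_code {ι α F : Type*} [Fintype ι] [DecidableEq ι] [Fintype α]
    [DecidableEq α] [CommRing F] [NoZeroDivisors F] [Fintype F] {s : α → F} {x : ι → F}
    (hs : Injective s) (hx : Injective x) (ω : α → ℕ) (hω : ∑ a, ω a = Fintype.card ι) :
    ∃ C : Finset (ι → α),
      (∀ c ∈ C, ∀ a, #{i | c i = a} = ω a) ∧
      (∀ u ∈ C, ∀ v ∈ C, u ≠ v → 3 ≤ hammingDist u v) ∧
      Nat.multinomial univ ω ≤ #C * Fintype.card F := by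
  classical
  set S : Finset (ι → α) := {c | ∀ a, #{i | c i = a} = ω a}
  obtain ⟨y, hy⟩ := exists_card_le_card_fiber_mul S (syndrome s x)
  refine ⟨{c ∈ S | syndrome s x c = y}, fun c hc ↦ (mem_filter.mp (mem_filter.mp hc).1).2,
    fun u hu v hv huv ↦ ?_, card_filter_forall_card_fiber_eq_multinomial ω hω ▸ hy⟩
  simp only [S, mem_filter, mem_univ, true_and] at hu hv
  exact three_le_hammingDist_of_syndrome_eq hs hx (fun a ↦ (hu.1 a).trans (hv.1 a).symm)
    (hu.2.trans hv.2.symm) huv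

theorem stmt_1_general (q p r : ℕ) (hp : p.Prime) (hpq : q ≤ p)
    (hr : ∃ k : ℕ, 0 < k ∧ r = p ^ k)
    (ω : Fin q → ℕ) (hω : ∑ a, ω a = r) :
    ∃ C : Finset (Fin r → Fin q),
      (∀ c ∈ C, ∀ a : Fin q, (Finset.univ.filter (fun i => c i = a)).card = ω a) ∧
      (∀ u ∈ C, ∀ v ∈ C, u ≠ v → 3 ≤ hammingDist u v) ∧
      Nat.multinomial Finset.univ ω ≤ C.card * r := by
  obtain ⟨k, hk, rfl⟩ := hr
  have : Fact p.Prime := ⟨hp⟩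
  let : Fintype (GaloisField p k) := Fintype.ofFinite _
  have hcard : Fintype.card (GaloisField p k) = p ^ k := by
    rw [← Nat.card_eq_fintype_card, GaloisField.card p k hk.ne']
  let positions : Fin (p ^ k) ≃ GaloisField p k := (Fintype.equivFinOfCardEq hcard).symm
  have hsymbols : Injective fun a : Fin q ↦ ((a : ℕ) : GaloisField p k) := fun a b hab ↦
    Fin.ext (CharP.natCast_injOn_Iio _ p (a.2.trans_le hpq) (b.2.trans_le hpq) hab)
  simpa [hcard] using exists_constComposition_code hsymbols positions.injective ω
    (by rw [hω, Fintype.card_fin])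

/-- Let `q ≥ 3` be an integer, `p` a prime with `p ≥ q`, and `r` a power
of `p`. For any composition `ω` of `r`, there is a `q`-ary constant-composition code of
length `r` with composition `ω`, minimum distance at least `3`, and size `M` with
`M · r ≥ r!/(ω₀!⋯ω_{q-1}!)`. -/
theorem stmt_1 (q p r : ℕ) (hq : 3 ≤ q) (hp : p.Prime) (hpq : q ≤ p)
    (hr : ∃ k : ℕ, 0 < k ∧ r = p ^ k)
    (ω : Fin q → ℕ) (hω : ∑ a, ω a = r) :
    ∃ C : Finset (Fin r → Fin q),
      (∀ c ∈ C, ∀ a : Fin q, (Finset.univ.filter (fun i => c i = a)).card = ω a) ∧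
      (∀ u ∈ C, ∀ v ∈ C, u ≠ v → 3 ≤ hammingDist u v) ∧
      Nat.multinomial Finset.univ ω ≤ C.card * r :=
  stmt_1_general q p r hp hpq hr ω hω
end

section
/- Let r be a power of 2. Then for any composition [ω₀, ω₁, ω₂] of r, there exists a ternary constant-composition code C of length r with composition [ω₀, ω₁, ω₂] whose minimum distance is at least 3 and whose size M satisfies M · r ≥ r!/(ω₀!·ω₁!·ω₂!). In particular, for even lengths r that are powers of 2, A_3(r, 3, [ω₀, ω₁, ω₂]) · r ≥ r!/(ω₀!·ω₁!·ω₂!). -/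
/-!
Identify the `r = 2 ^ k` positions with the elements of the field `GF(2 ^ k)` and the three
symbols with three distinct field elements `φ a`. The checksum `c ↦ ∑ i, φ (c i) * i` splits the
words of composition `ω` into `r` classes, so some class holds at least a `1 / r` fraction of the
multinomial count. Two distinct words of the same composition at distance at most `2` differ by
a transposition of positions `i, j` with `c i ≠ c j`, which changes the checksum by
`(φ (c i) - φ (c j)) * (j - i) ≠ 0`; hence each class has minimum distance at least `3`.
For `r = 2` a single word already suffices, as the multinomial is then at most `2! = 2`.
-/

open Finset

section Composition

variable {ι α : Type*} [Fintype ι] [DecidableEq α]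

def HasComposition (c : ι → α) (ω : α → ℕ) : Prop :=
  ∀ a, #{i | c i = a} = ω a

instance [Fintype α] (ω : α → ℕ) : DecidablePred (HasComposition (ι := ι) · ω) :=
  fun _ => Fintype.decidableForallFintype

theorem exists_hasComposition [Fintype α] {ω : α → ℕ} (hω : ∑ a, ω a = Fintype.card ι) :
    ∃ c : ι → α, HasComposition c ω := by
  have e : ι ≃ Σ a, Fin (ω a) := Fintype.equivOfCardEq (by simp [hω])
  refine ⟨fun i => (e i).1, fun a => ?_⟩
  rw [card_equiv e (t := {x | x.1 = a}) (by simp), ← Fintype.card_subtype,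
    Fintype.card_congr (Equiv.sigmaSubtype a), Fintype.card_fin]

theorem exists_perm_comp_eq_iff {w c : ι → α} :
    (∃ σ : Equiv.Perm ι, w ∘ σ = c) ↔ ∀ a, #{i | c i = a} = #{i | w i = a} := by
  constructor
  · rintro ⟨σ, rfl⟩ a
    exact card_equiv σ (by simp)
  · intro h
    refine ⟨Equiv.ofFiberEquiv fun a => Fintype.equivOfCardEq ?_,
      funext fun i => Equiv.ofFiberEquiv_map _ i⟩
    simp only [Fintype.card_subtype, h]

variable [DecidableEq ι] [Fintype α]

theorem card_filter_hasComposition_mul_prod_factorial {w : ι → α} {ω : α → ℕ}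
    (hw : HasComposition w ω) :
    #{c : ι → α | HasComposition c ω} * ∏ a, (ω a).factorial = (Fintype.card ι).factorial := by
  -- orbit–stabilizer for `Perm ι` acting on words by precomposition
  have horbit : MulAction.orbit (Equiv.Perm ι)ᵈᵐᵃ w =
      ↑({c : ι → α | HasComposition c ω} : Finset (ι → α)) := by
    ext c
    simp only [coe_filter, mem_univ, true_and, Set.mem_ofPred_eq, HasComposition, ← hw _]
    rw [← exists_perm_comp_eq_iff]
    exact DomMulAct.mk.surjective.exists
  have hstab : Nat.card (MulAction.stabilizer (Equiv.Perm ι)ᵈᵐᵃ w) = ∏ a, (ω a).factorial := by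
    rw [← Nat.card_congr
        (Equiv.subtypeEquiv DomMulAct.mk fun _ => DomMulAct.mem_stabilizer_iff.symm),
      Nat.card_eq_fintype_card]
    simp only [Equiv.symm_apply_apply]
    rw [DomMulAct.stabilizer_card]
    simp only [Fintype.card_subtype, hw _]
  have := (MulAction.stabilizer (Equiv.Perm ι)ᵈᵐᵃ w).card_mul_index
  rw [MulAction.index_stabilizer, horbit, Set.ncard_coe_finset, hstab] at this
  rw [mul_comm, this, Nat.card_congr DomMulAct.mk.symm, Nat.card_perm, Nat.card_eq_fintype_card]

theorem card_filter_hasComposition {ω : α → ℕ} (hω : ∑ a, ω a = Fintype.card ι) :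
    #{c : ι → α | HasComposition c ω} = Nat.multinomial univ ω := by
  obtain ⟨w, hw⟩ := exists_hasComposition hω
  have hpos : 0 < ∏ a, (ω a).factorial := prod_pos fun a _ => Nat.factorial_pos _
  apply Nat.eq_of_mul_eq_mul_right hpos
  rw [card_filter_hasComposition_mul_prod_factorial hw, mul_comm, Nat.multinomial_spec, hω]

end Composition

section SameComposition

variable {ι α : Type*} [Fintype ι] [DecidableEq α] {u v : ι → α}

theorem exists_ne_apply_eq_of_card_filter_eq (h : ∀ a, #{x | u x = a} = #{x | v x = a})
    {i : ι} (hi : u i ≠ v i) : ∃ j, u j ≠ v j ∧ v j = u i := by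
  by_contra! hcon
  have hsub : ({x | v x = u i} : Finset ι) ⊂ ({x | u x = u i} : Finset ι) := by
    refine (ssubset_iff_of_subset fun x hx => ?_).2 ⟨i, by simp, by simpa [eq_comm] using hi⟩
    simp only [mem_filter, mem_univ, true_and] at hx ⊢
    by_cases hx' : u x = v x
    · rwa [hx']
    · exact absurd hx (hcon x hx')
  exact (card_lt_card hsub).ne' (h _)

variable [DecidableEq ι]

theorem eq_comp_swap_of_hammingDist_le_two (h : ∀ a, #{x | u x = a} = #{x | v x = a})
    (hne : u ≠ v) (hdist : hammingDist u v ≤ 2) :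
    ∃ i j, u i ≠ u j ∧ v = u ∘ Equiv.swap i j := by
  obtain ⟨i, hi⟩ := Function.ne_iff.mp hne
  obtain ⟨j, hj, hji⟩ := exists_ne_apply_eq_of_card_filter_eq h hi
  obtain ⟨k, hk, hki⟩ := exists_ne_apply_eq_of_card_filter_eq (fun a => (h a).symm) (Ne.symm hi)
  have hij : i ≠ j := by rintro rfl; exact hi hji.symm
  have hik : i ≠ k := by rintro rfl; exact hi hki
  -- at most two coordinates differ, and `i ≠ j` are two of them
  have hagree : ∀ x, x ≠ i → x ≠ j → u x = v x := by
    intro x hxi hxj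
    by_contra hx
    refine (hdist.trans_lt (two_lt_card.2 ⟨i, ?_, j, ?_, x, ?_, hij, hxi.symm, hxj.symm⟩)).false <;>
      simpa
  have hkj : k = j := by
    by_contra hkj
    exact (Ne.symm hk) (hagree k hik.symm hkj)
  subst hkj
  refine ⟨i, k, hki ▸ hi, funext fun x => ?_⟩
  rcases eq_or_ne x i with rfl | hxi
  · simp [hki]
  rcases eq_or_ne x k with rfl | hxk
  · simp [hji]
  · simp [Equiv.swap_apply_of_ne_of_ne hxi hxk, hagree x hxi hxk]

end SameComposition

section Checksum

variable {ι α R : Type*} [Fintype ι] [DecidableEq ι] [CommRing R]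

def checksum (φ : α → R) (e : ι → R) (c : ι → α) : R :=
  ∑ i, φ (c i) * e i

theorem checksum_comp_swap_sub (φ : α → R) (e : ι → R) (c : ι → α) {i j : ι} (hij : i ≠ j) :
    checksum φ e (c ∘ Equiv.swap i j) - checksum φ e c = (φ (c i) - φ (c j)) * (e j - e i) := by
  have hswap : ∑ x, φ (c (Equiv.swap i j x)) * e x = ∑ x, φ (c x) * e (Equiv.swap i j x) := by
    simpa using Equiv.sum_comp (Equiv.swap i j) fun x => φ (c x) * e (Equiv.swap i j x)
  simp only [checksum, Function.comp_apply, hswap, ← sum_sub_distrib]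
  rw [Fintype.sum_eq_add i j hij]
  · simp only [Equiv.swap_apply_left, Equiv.swap_apply_right]
    ring
  · rintro x ⟨hxi, hxj⟩
    simp [Equiv.swap_apply_of_ne_of_ne hxi hxj]

theorem three_le_hammingDist_of_checksum_eq [DecidableEq α] [IsDomain R] {φ : α → R} {e : ι → R}
    (hφ : Function.Injective φ) (he : Function.Injective e) {u v : ι → α}
    (h : ∀ a, #{x | u x = a} = #{x | v x = a}) (hne : u ≠ v)
    (hsum : checksum φ e u = checksum φ e v) : 3 ≤ hammingDist u v := by
  by_contra! hlt
  obtain ⟨i, j, hu, rfl⟩ := eq_comp_swap_of_hammingDist_le_two h hne (by omega)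
  have hij : i ≠ j := by rintro rfl; exact hu rfl
  have := checksum_comp_swap_sub φ e u hij
  rw [hsum, sub_self] at this
  exact mul_ne_zero (sub_ne_zero.2 (hφ.ne hu)) (sub_ne_zero.2 (he.ne hij.symm)) this.symm

end Checksum

theorem exists_code_of_embedding {ι α R : Type*} [Fintype ι] [DecidableEq ι] [Fintype α]
    [DecidableEq α] [Fintype R] [DecidableEq R] [CommRing R] [IsDomain R] (φ : α ↪ R) (e : ι ↪ R)
    (ω : α → ℕ) :
    ∃ C : Finset (ι → α), (∀ c ∈ C, HasComposition c ω) ∧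
      (∀ u ∈ C, ∀ v ∈ C, u ≠ v → 3 ≤ hammingDist u v) ∧
      #{c : ι → α | HasComposition c ω} ≤ Fintype.card R * #C := by
  set W : Finset (ι → α) := {c | HasComposition c ω}
  let fiber (y : R) : Finset (ι → α) := {c ∈ W | checksum φ e c = y}
  obtain ⟨y, hy⟩ := Finite.exists_max fun y => #(fiber y)
  refine ⟨fiber y, fun c hc => (mem_filter.1 (mem_filter.1 hc).1).2, ?_, ?_⟩
  · intro u hu v hv hne
    simp only [fiber, W, mem_filter, mem_univ, true_and] at hu hv
    exact three_le_hammingDist_of_checksum_eq φ.injective e.injective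
      (fun a => (hu.1 a).trans (hv.1 a).symm) hne (hu.2.trans hv.2.symm)
  · calc #W = ∑ y, #(fiber y) := card_eq_sum_card_fiberwise fun _ _ => mem_univ _
      _ ≤ ∑ _y : R, #(fiber y) := sum_le_sum fun z _ => hy z
      _ = Fintype.card R * #(fiber y) := by rw [sum_const, card_univ, smul_eq_mul]

theorem multinomial_le_factorial_sum {α : Type*} (s : Finset α) (f : α → ℕ) :
    Nat.multinomial s f ≤ (∑ a ∈ s, f a).factorial :=
  Nat.le_of_dvd (Nat.factorial_pos _) (Dvd.intro_left _ (Nat.multinomial_spec s f))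

theorem exists_code_two_pow {k : ℕ} (hk : 0 < k) (ω : Fin 3 → ℕ) (hω : ∑ a, ω a = 2 ^ k) :
    ∃ C : Finset (Fin (2 ^ k) → Fin 3), (∀ c ∈ C, HasComposition c ω) ∧
      (∀ u ∈ C, ∀ v ∈ C, u ≠ v → 3 ≤ hammingDist u v) ∧
      Nat.multinomial univ ω ≤ #C * 2 ^ k := by
  have hω' : ∑ a, ω a = Fintype.card (Fin (2 ^ k)) := by rw [hω, Fintype.card_fin]
  obtain rfl | hk : k = 1 ∨ 2 ≤ k := by omega
  · obtain ⟨w, hw⟩ := exists_hasComposition hω'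
    refine ⟨{w}, by simpa using hw, by simp, ?_⟩
    simpa [hω] using multinomial_le_factorial_sum univ ω
  · let F := GaloisField 2 k
    have := Fintype.ofFinite F
    have hF : Fintype.card F = 2 ^ k := by
      rw [← Nat.card_eq_fintype_card, GaloisField.card 2 k (by omega)]
    have e : Fin (2 ^ k) ≃ F := (Fintype.equivFinOfCardEq hF).symm
    have h3 : 3 ≤ 2 ^ k := (Nat.pow_le_pow_right two_pos hk).trans' (by norm_num)
    classical
    obtain ⟨C, hC, hdist, hcard⟩ :=
      exists_code_of_embedding ((Fin.castLEEmb h3).trans e.toEmbedding) e.toEmbedding ω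
    rw [card_filter_hasComposition hω', hF] at hcard
    exact ⟨C, hC, hdist, hcard.trans_eq (mul_comm _ _)⟩

/-- Let `r` be a power of `2`. For any composition `[ω₀, ω₁, ω₂]` of `r`
there is a ternary constant-composition code of length `r` with composition `ω`,
minimum distance at least `3`, and size `M` with `M · r ≥ r!/(ω₀!ω₁!ω₂!)`.
In particular `A₃(r, 3, [ω₀, ω₁, ω₂]) · r ≥ r!/(ω₀!ω₁!ω₂!)`, where
`A₃(r, 3, ω)` is the maximum size of such a code. -/
theorem stmt_2 (r : ℕ) (hr : ∃ k : ℕ, 0 < k ∧ r = 2 ^ k)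
    (ω : Fin 3 → ℕ) (hω : ∑ a, ω a = r) :
    (∃ C : Finset (Fin r → Fin 3),
      (∀ c ∈ C, ∀ a : Fin 3, (Finset.univ.filter (fun i => c i = a)).card = ω a) ∧
      (∀ u ∈ C, ∀ v ∈ C, u ≠ v → 3 ≤ hammingDist u v) ∧
      Nat.multinomial Finset.univ ω ≤ C.card * r) ∧
    Nat.multinomial Finset.univ ω ≤
      (sSup {M : ℕ | ∃ C : Finset (Fin r → Fin 3),
        (∀ c ∈ C, ∀ a : Fin 3, (Finset.univ.filter (fun i => c i = a)).card = ω a) ∧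
        (∀ u ∈ C, ∀ v ∈ C, u ≠ v → 3 ≤ hammingDist u v) ∧
        C.card = M}) * r := by
  obtain ⟨k, hk, rfl⟩ := hr
  obtain ⟨C, hC, hdist, hcard⟩ := exists_code_two_pow hk ω hω
  have hbdd : BddAbove {M : ℕ | ∃ C : Finset (Fin (2 ^ k) → Fin 3),
      (∀ c ∈ C, ∀ a : Fin 3, #{i | c i = a} = ω a) ∧
      (∀ u ∈ C, ∀ v ∈ C, u ≠ v → 3 ≤ hammingDist u v) ∧ #C = M} :=
    ⟨Fintype.card (Fin (2 ^ k) → Fin 3), by rintro _ ⟨C', -, -, rfl⟩; exact card_le_univ C'⟩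
  exact ⟨⟨C, hC, hdist, hcard⟩,
    hcard.trans (Nat.mul_le_mul_right _ (le_csSup hbdd ⟨C, hC, hdist, rfl⟩))⟩
end

section
/- Let q be an integer with 3 ≤ q, let p be a prime with p > 5 and q ≤ p, and let r be a power of p with r ≥ 7. Then for any composition [ω₀, ω₁, …, ω_{q−1}] of r, there exists a q-ary constant-composition code C of length r with composition [ω₀, ω₁, …, ω_{q−1}] whose minimum distance is at least 6 and whose size M satisfies M · r⁴ ≥ r!/(ω₀!·ω₁!⋯ω_{q−1}!). -/
/-!
Put the `r` coordinates at the distinct elements `xᵢ` of `F = GF(r)` and read the symbols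
of `Fin q` in `F`, which is injective because `q ≤ char F`. Sorting the words of composition
`ω` by their syndrome `(∑ᵢ cᵢ xᵢʲ)_{j=1..4} ∈ F⁴`, some class contains at least a `1/r⁴`
fraction of them. Two words of one class also agree in `∑ᵢ cᵢ` (equal compositions), so
their difference is killed by the `5 × r` Vandermonde matrix `(xᵢʲ)_{j<5}`, any five columns
of which are independent: it has at least six nonzero entries.
-/

open Finset Function
open scoped Nat

section Pigeonhole

variable {α β : Type*} [DecidableEq β]

theorem Finset.exists_card_le_card_fiber_mul {f : α → β} {s : Finset α} {t : Finset β}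
    (hf : ∀ a ∈ s, f a ∈ t) (ht : t.Nonempty) :
    ∃ b ∈ t, #s ≤ #{a ∈ s | f a = b} * #t := by
  obtain ⟨b, hb, hmax⟩ := t.exists_max_image (fun b => #{a ∈ s | f a = b}) ht
  exact ⟨b, hb, card_le_mul_card_image_of_maps_to hf _ hmax⟩

end Pigeonhole

section Vandermonde

variable {ι R : Type*} [Fintype ι] [CommRing R] [IsDomain R] [DecidableEq R] {x : ι → R}

theorem eq_zero_of_hammingNorm_le_of_pow_sum_eq_zero (hx : Injective x) {d : ι → R} {m : ℕ}
    (hd : hammingNorm d ≤ m) (h : ∀ j < m, ∑ i, d i * x i ^ j = 0) : d = 0 := by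
  set D : Finset ι := {i | d i ≠ 0}
  set e : Fin #D ≃ D := D.equivFin.symm
  have hv : (fun l => d (e l)) = 0 := by
    refine Matrix.eq_zero_of_forall_pow_sum_mul_pow_eq_zero (f := fun l => x (e l))
      (fun a b hab => e.injective (Subtype.ext (hx hab))) fun j => ?_
    calc ∑ l, d (e l) * x (e l) ^ (j : ℕ)
        = ∑ i ∈ D, d i * x i ^ (j : ℕ) := by
          rw [← D.sum_coe_sort]; exact e.sum_comp (fun i : D => d i * x i ^ (j : ℕ))
      _ = ∑ i, d i * x i ^ (j : ℕ) :=
          sum_subset (subset_univ D) fun i _ hi => by simp_all [D]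
      _ = 0 := h j (j.2.trans_le hd)
  ext i
  by_contra hi
  exact hi (by simpa using congrFun hv (e.symm ⟨i, by simpa [D] using hi⟩))

theorem lt_hammingDist_of_pow_sum_eq (hx : Injective x) {u v : ι → R} (huv : u ≠ v) {m : ℕ}
    (h : ∀ j < m, ∑ i, u i * x i ^ j = ∑ i, v i * x i ^ j) : m < hammingDist u v := by
  by_contra! hle
  refine huv (neg_add_eq_zero.mp ?_)
  refine eq_zero_of_hammingNorm_le_of_pow_sum_eq_zero hx (hammingDist_eq_hammingNorm u v ▸ hle)
    fun j hj => ?_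
  simp only [Pi.add_apply, Pi.neg_apply, neg_add_eq_sub, sub_mul, sum_sub_distrib, h j hj,
    sub_self]

end Vandermonde

section Composition

variable {α β : Type*} [Fintype α] [DecidableEq β]

theorem card_filter_comp_perm_eq (c : α → β) (σ : Equiv.Perm α) (b : β) :
    #{x | c (σ x) = b} = #{x | c x = b} := by
  simp only [← Fintype.card_subtype]
  exact Fintype.card_congr (σ.subtypeEquiv fun _ => Iff.rfl)

theorem exists_perm_comp_eq (c₀ c : α → β)
    (h : ∀ b, #{x | c x = b} = #{x | c₀ x = b}) : ∃ σ : Equiv.Perm α, c₀ ∘ σ = c := by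
  have e : ∀ b, {x // c x = b} ≃ {x // c₀ x = b} := fun b =>
    Fintype.equivOfCardEq (by simp only [Fintype.card_subtype, h b])
  refine ⟨(Equiv.sigmaFiberEquiv c).symm.trans
    ((Equiv.sigmaCongrRight e).trans (Equiv.sigmaFiberEquiv c₀)), funext fun x => ?_⟩
  exact (e (c x) ⟨x, rfl⟩).2

theorem sum_comp_eq_of_card_filter_eq {M : Type*} [AddCommMonoid M] (g : β → M)
    {c₀ c : α → β}
    (h : ∀ b, #{x | c x = b} = #{x | c₀ x = b}) : ∑ x, g (c x) = ∑ x, g (c₀ x) := by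
  obtain ⟨σ, rfl⟩ := exists_perm_comp_eq c₀ c h
  exact Equiv.sum_comp σ (g ∘ c₀)

variable [DecidableEq α] [Fintype β]

theorem card_perm_comp_eq (c₀ : α → β) (τ : Equiv.Perm α) :
    #{σ : Equiv.Perm α | c₀ ∘ σ = c₀ ∘ τ} = ∏ b, (#{x | c₀ x = b})! := by
  simp only [← Fintype.card_subtype]
  rw [← DomMulAct.stabilizer_card]
  refine Fintype.card_congr (Equiv.subtypeEquiv (Equiv.mulRight τ⁻¹) fun σ => ?_)
  simp [Equiv.Perm.coe_mul, ← Function.comp_assoc, Equiv.comp_symm_eq]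

variable (α) in
def wordsOfComposition (ω : β → ℕ) : Finset (α → β) :=
  {c | ∀ b, #{x | c x = b} = ω b}

@[simp]
theorem mem_wordsOfComposition {ω : β → ℕ} {c : α → β} :
    c ∈ wordsOfComposition α ω ↔ ∀ b, #{x | c x = b} = ω b := by
  simp [wordsOfComposition]

theorem wordsOfComposition_nonempty {ω : β → ℕ} (hω : ∑ b, ω b = Fintype.card α) :
    (wordsOfComposition α ω).Nonempty := by
  obtain ⟨e⟩ : Nonempty ((Σ b, Fin (ω b)) ≃ α) := ⟨Fintype.equivOfCardEq (by simp [hω])⟩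
  refine ⟨fun x => (e.symm x).1, mem_wordsOfComposition.2 fun b => ?_⟩
  rw [← Fintype.card_subtype,
    ← Fintype.card_congr (e.subtypeEquiv (p := fun s => s.1 = b) fun s => by simp),
    Fintype.card_congr (Equiv.sigmaSubtype b), Fintype.card_fin]

theorem card_wordsOfComposition {ω : β → ℕ} (hω : ∑ b, ω b = Fintype.card α) :
    #(wordsOfComposition α ω) = Nat.multinomial univ ω := by
  obtain ⟨c₀, hc₀⟩ := wordsOfComposition_nonempty hω
  rw [mem_wordsOfComposition] at hc₀
  have hmaps : ∀ σ ∈ (univ : Finset (Equiv.Perm α)), c₀ ∘ σ ∈ wordsOfComposition α ω :=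
    fun σ _ => mem_wordsOfComposition.2 fun b =>
      (card_filter_comp_perm_eq c₀ σ b).trans (hc₀ b)
  have hfiber : ∀ c ∈ wordsOfComposition α ω,
      #{σ : Equiv.Perm α | c₀ ∘ σ = c} = ∏ b, (ω b)! := by
    intro c hc
    obtain ⟨τ, rfl⟩ := exists_perm_comp_eq c₀ c fun b =>
      (mem_wordsOfComposition.1 hc b).trans (hc₀ b).symm
    simp only [card_perm_comp_eq, hc₀]
  have hcount : (∏ b, (ω b)!) * #(wordsOfComposition α ω) = (∑ b, ω b)! := by
    calc (∏ b, (ω b)!) * #(wordsOfComposition α ω)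
        = ∑ c ∈ wordsOfComposition α ω, #{σ : Equiv.Perm α | c₀ ∘ σ = c} := by
          rw [sum_congr rfl hfiber, sum_const, smul_eq_mul, mul_comm]
      _ = #(univ : Finset (Equiv.Perm α)) := (card_eq_sum_card_fiberwise hmaps).symm
      _ = (∑ b, ω b)! := by rw [card_univ, Fintype.card_perm, hω]
  exact Nat.eq_of_mul_eq_mul_left (prod_pos fun b _ => (ω b).factorial_pos)
    (hcount.trans (Nat.multinomial_spec univ ω).symm)

end Composition

theorem exists_large_code_in_wordsOfComposition {ι β R : Type*} [Fintype ι] [DecidableEq ι]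
    [Fintype β] [DecidableEq β] [CommRing R] [IsDomain R] [Fintype R] [DecidableEq R]
    {x : ι → R} (hx : Injective x) {ψ : β → R} (hψ : Injective ψ) (ω : β → ℕ) (m : ℕ) :
    ∃ C ⊆ wordsOfComposition ι ω,
      (∀ u ∈ C, ∀ v ∈ C, u ≠ v → m + 1 < hammingDist u v) ∧
      #(wordsOfComposition ι ω) ≤ #C * Fintype.card R ^ m := by
  set syndrome : (ι → β) → Fin m → R := fun c j => ∑ i, ψ (c i) * x i ^ (j + 1 : ℕ)
  obtain ⟨s, -, hs⟩ := exists_card_le_card_fiber_mul (f := syndrome)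
    (s := wordsOfComposition ι ω) (fun _ _ => mem_univ _) univ_nonempty
  refine ⟨{c ∈ wordsOfComposition ι ω | syndrome c = s}, filter_subset _ _, ?_,
    by simpa using hs⟩
  intro u hu v hv huv
  obtain ⟨huω, hsu⟩ := mem_filter.1 hu
  obtain ⟨hvω, hsv⟩ := mem_filter.1 hv
  rw [← hammingDist_comp (fun _ => ψ) fun _ => hψ]
  refine lt_hammingDist_of_pow_sum_eq hx (fun h => huv (funext fun i => hψ (congrFun h i)))
    fun j hj => ?_
  cases j with
  | zero =>
    simpa using sum_comp_eq_of_card_filter_eq ψ fun b =>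
      (mem_wordsOfComposition.1 huω b).trans (mem_wordsOfComposition.1 hvω b).symm
  | succ k => exact congrFun (hsu.trans hsv.symm) ⟨k, by omega⟩

theorem stmt_6_general (q p r : ℕ) (hp : p.Prime) (hpq : q ≤ p)
    (hr : ∃ k : ℕ, 0 < k ∧ r = p ^ k)
    (ω : Fin q → ℕ) (hω : ∑ a, ω a = r) :
    ∃ C : Finset (Fin r → Fin q),
      (∀ c ∈ C, ∀ a : Fin q, (Finset.univ.filter (fun i => c i = a)).card = ω a) ∧
      (∀ u ∈ C, ∀ v ∈ C, u ≠ v → 6 ≤ hammingDist u v) ∧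
      Nat.multinomial Finset.univ ω ≤ C.card * r ^ 4 := by
  obtain ⟨k, hk, hrk⟩ := hr
  have : Fact p.Prime := ⟨hp⟩
  classical
  let F := GaloisField p k
  let _ : Fintype F := Fintype.ofFinite F
  have hcard : Fintype.card F = r := by
    rw [← Nat.card_eq_fintype_card, GaloisField.card p k hk.ne', hrk]
  let e : Fin r ≃ F := Fintype.equivOfCardEq (by rw [Fintype.card_fin, hcard])
  have hψ : Injective fun a : Fin q => ((a : ℕ) : F) := fun a b h =>
    Fin.ext (CharP.natCast_injOn_Iio F p (a.2.trans_le hpq) (b.2.trans_le hpq) h)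
  obtain ⟨C, hCω, hCdist, hCcard⟩ :=
    exists_large_code_in_wordsOfComposition e.injective hψ ω 4
  refine ⟨C, fun c hc => mem_wordsOfComposition.1 (hCω hc), hCdist, ?_⟩
  rw [← card_wordsOfComposition (by rw [hω, Fintype.card_fin])]
  rwa [hcard] at hCcard

/-- Let `q` be an integer with `3 ≤ q`, `p` a prime with `p > 5` and
`q ≤ p`, and `r` a power of `p` with `r ≥ 7`. For any composition `ω` of `r`, there is a
`q`-ary constant-composition code of length `r` with composition `ω`, minimum distance at
least `6`, and size `M` with `M · r⁴ ≥ r!/(ω₀!⋯ω_{q-1}!)`. -/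
theorem stmt_6 (q p r : ℕ) (hq : 3 ≤ q) (hp : p.Prime) (hp5 : 5 < p) (hpq : q ≤ p)
    (hr : ∃ k : ℕ, 0 < k ∧ r = p ^ k) (hr7 : 7 ≤ r)
    (ω : Fin q → ℕ) (hω : ∑ a, ω a = r) :
    ∃ C : Finset (Fin r → Fin q),
      (∀ c ∈ C, ∀ a : Fin q, (Finset.univ.filter (fun i => c i = a)).card = ω a) ∧
      (∀ u ∈ C, ∀ v ∈ C, u ≠ v → 6 ≤ hammingDist u v) ∧
      Nat.multinomial Finset.univ ω ≤ C.card * r ^ 4 :=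
  stmt_6_general q p r hp hpq hr ω hω
end
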